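/- arXiv:2003.09796 — 6 statements merged into one kernel-verified Lean document; each statement's English description precedes it below -/
import Mathlib

section
/- Let r, K, d_h, d_b, τ > 0 with r > 2·d_h·√K·e^{d_b·τ}, and let H₁* < H₂* be the two positive roots of d_h(K + H²) = e^{−d_b τ} r H. Then −d_h + 2K d_h/(K + (H₁*)²) > 0 and −d_h + 2K d_h/(K + (H₂*)²) < 0. -/
open Real

theorem stmt_4 (r K d_b d_h τ H₁ H₂ : ℝ)
    (hr : 0 < r) (hK : 0 < K) (hdb : 0 < d_b) (hdh : 0 < d_h) (hτ : 0 < τ)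
    (hcond : r > 2 * d_h * Real.sqrt K * exp (d_b * τ))
    (hH₁ : 0 < H₁) (hlt : H₁ < H₂)
    (heq₁ : d_h * (K + H₁ ^ 2) = exp (-(d_b * τ)) * r * H₁)
    (heq₂ : d_h * (K + H₂ ^ 2) = exp (-(d_b * τ)) * r * H₂) :
    -d_h + 2 * K * d_h / (K + H₁ ^ 2) > 0 ∧
    -d_h + 2 * K * d_h / (K + H₂ ^ 2) < 0 := by
  have hvieta : d_h * (H₂ - H₁) * (K - H₁ * H₂) = 0 := by
    linear_combination H₂ * heq₁ - H₁ * heq₂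
  have hKprod : K = H₁ * H₂ := by
    have h1 : d_h * (H₂ - H₁) ≠ 0 := ne_of_gt (mul_pos hdh (by linarith))
    have := mul_eq_zero.mp hvieta
    rcases this with h | h
    · exact absurd h h1
    · linarith
  constructor
  · have hpos : 0 < K + H₁ ^ 2 := by positivity
    rw [show -d_h + 2 * K * d_h / (K + H₁ ^ 2)
        = (K - H₁ ^ 2) * d_h / (K + H₁ ^ 2) from by field_simp; ring]
    exact div_pos (by nlinarith [mul_pos hdh (mul_pos hH₁ (sub_pos.mpr hlt))]) hpos
  · have hpos : 0 < K + H₂ ^ 2 := by positivity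
    rw [show -d_h + 2 * K * d_h / (K + H₂ ^ 2)
        = (K - H₂ ^ 2) * d_h / (K + H₂ ^ 2) from by field_simp; ring]
    exact div_neg_of_neg_of_pos (by nlinarith [mul_pos hdh (mul_pos (hH₁.trans hlt) (sub_pos.mpr hlt))]) hpos
end

section
/- Let d_h, τ > 0. Every root λ ∈ ℂ of the equation λ + d_h − d_h·e^{−λ τ} = 0 other than λ = 0 satisfies Re(λ) < 0, and λ = 0 is a simple root. -/
/-! The equation says `λ + d = d e^{-λτ}`. For `Re λ ≥ 0` the right-hand side has modulus at most `d`,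
while `|λ + d| > d` unless `λ = 0`: the disc of radius `d` about `-d` meets the closed right half-plane
only at the origin. At `λ = 0` the derivative is `1 + dτ > 0`. -/

open Complex

theorem Complex.eq_zero_of_norm_add_ofReal_le {z : ℂ} {d : ℝ} (hz : 0 ≤ z.re)
    (h : ‖z + d‖ ≤ d) : z = 0 := by
  have hd : 0 ≤ d := (norm_nonneg _).trans h
  have hsq : (z.re + d) ^ 2 + z.im ^ 2 ≤ d ^ 2 := by
    have hnormSq : ‖z + d‖ ^ 2 = (z.re + d) ^ 2 + z.im ^ 2 := by
      rw [Complex.sq_norm, Complex.normSq_apply]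
      simp only [add_re, ofReal_re, add_im, ofReal_im, add_zero]
      ring
    rw [← hnormSq]
    exact pow_le_pow_left₀ (norm_nonneg _) h 2
  have hre : z.re = 0 := by nlinarith
  have him : z.im = 0 := by nlinarith
  exact Complex.ext hre him

theorem Complex.norm_exp_neg_mul_ofReal_le_one {z : ℂ} {τ : ℝ} (hz : 0 ≤ z.re) (hτ : 0 ≤ τ) :
    ‖exp (-z * τ)‖ ≤ 1 := by
  rw [Complex.norm_exp, Real.exp_le_one_iff]
  simpa using mul_nonneg hz hτ

theorem hasDerivAt_add_sub_mul_exp_neg_mul_zero (d τ : ℝ) :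
    HasDerivAt (fun z : ℂ => z + d - d * exp (-z * τ)) (1 + d * τ) 0 := by
  have hexp : HasDerivAt (fun z : ℂ => exp (-z * τ)) (exp (-0 * τ) * (-1 * τ)) 0 :=
    (((hasDerivAt_id (0 : ℂ)).neg).mul_const (τ : ℂ)).cexp
  exact (((hasDerivAt_id (0 : ℂ)).add_const (d : ℂ)).sub (hexp.const_mul (d : ℂ))).congr_deriv
    (by simp)

theorem stmt_7 (d_h τ : ℝ) (hdh : 0 < d_h) (hτ : 0 < τ) :
    (∀ lam : ℂ, lam + (d_h : ℂ) - (d_h : ℂ) * Complex.exp (-lam * (τ : ℂ)) = 0 →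
      lam ≠ 0 → lam.re < 0) ∧
    deriv (fun z : ℂ => z + (d_h : ℂ) - (d_h : ℂ) * Complex.exp (-z * (τ : ℂ))) 0 ≠ 0 := by
  refine ⟨fun lam hroot hne => ?_, ?_⟩
  · by_contra! hre
    refine hne (Complex.eq_zero_of_norm_add_ofReal_le (d := d_h) hre ?_)
    calc ‖lam + d_h‖ = d_h * ‖exp (-lam * τ)‖ := by
          rw [sub_eq_zero.mp hroot, norm_mul, norm_real, Real.norm_of_nonneg hdh.le]
      _ ≤ d_h * 1 := by gcongr; exact Complex.norm_exp_neg_mul_ofReal_le_one hre hτ.le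
      _ = d_h := mul_one d_h
  · rw [(hasDerivAt_add_sub_mul_exp_neg_mul_zero d_h τ).deriv]
    exact_mod_cast (by positivity : 1 + d_h * τ ≠ 0)
end

section
/- Consider the delay differential inequality derived from H'(t) ≤ e^{−d_b τ}·r·H(t−τ)²/(K + H(t−τ)²) − d_h·H(t) with continuous nonnegative bounded H, and suppose d_h > r·e^{−d_b·τ}/(2√K). Then limsup_{t→∞} H(t) = 0, i.e., H(t) → 0 as t → ∞. -/
open Real Filter Topology

/-!
By AM-GM, `2 √K x ≤ K + x²`, so the Hill-type nonlinearity `a x² / (K + x²)` is bounded by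
`c x` with `c = a / (2 √K)`, and the hypothesis says `c < d_h`. Hence `H` obeys the linear delay
inequality `H' t ≤ c H (t - τ) - d_h H t`. If `L = limsup H`, then eventually `H (t - τ) < L + ε`,
and Grönwall's inequality for `H' ≤ c (L + ε) - d_h H` gives `L ≤ c (L + ε) / d_h`. Letting
`ε → 0`, `d_h L ≤ c L`, which forces `L = 0` since `c < d_h`.
-/

theorem mul_sq_div_add_sq_le {a K x : ℝ} (ha : 0 ≤ a) (hK : 0 < K) (hx : 0 ≤ x) :
    a * x ^ 2 / (K + x ^ 2) ≤ a / (2 * √K) * x := by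
  have hsK : 0 < √K := sqrt_pos.2 hK
  have amgm : 2 * √K * x ≤ K + x ^ 2 := by nlinarith [sq_nonneg (√K - x), sq_sqrt hK.le]
  rw [div_le_iff₀ (by positivity), div_mul_eq_mul_div, div_mul_eq_mul_div,
    le_div_iff₀ (by positivity)]
  nlinarith [mul_le_mul_of_nonneg_left amgm (by positivity : 0 ≤ a * x)]

theorem tendsto_gronwallBound_of_neg {δ K ε : ℝ} (hK : K < 0) :
    Tendsto (gronwallBound δ K ε) atTop (𝓝 (-(ε / K))) := by
  rw [gronwallBound_of_K_ne_0 hK.ne]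
  have hexp : Tendsto (fun x => exp (K * x)) atTop (𝓝 0) :=
    tendsto_exp_atBot.comp (tendsto_id.const_mul_atTop_of_neg hK)
  convert (hexp.const_mul δ).add ((hexp.sub_const 1).const_mul (ε / K)) using 2; simp

theorem limsup_le_div_of_deriv_le_sub_mul {f f' : ℝ → ℝ} {A d : ℝ} (hd : 0 < d)
    (hf : IsCoboundedUnder (· ≤ ·) atTop f)
    (hderiv : ∀ᶠ t in atTop, HasDerivAt f (f' t) t)
    (hle : ∀ᶠ t in atTop, f' t ≤ A - d * f t) :
    limsup f atTop ≤ A / d := by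
  obtain ⟨T, hT⟩ := eventually_atTop.1 (hderiv.and hle)
  have hgronwall : ∀ t, T ≤ t → f t ≤ gronwallBound (f T) (-d) A (t - T) := fun t ht =>
    le_gronwallBound_of_liminf_deriv_right_le
      (fun s hs => (hT s hs.1).1.continuousAt.continuousWithinAt)
      (fun s hs _ hr => (hT s hs.1).1.hasDerivWithinAt.liminf_right_slope_le hr) le_rfl
      (fun s hs => by linarith [(hT s hs.1).2]) t ⟨ht, le_rfl⟩
  have hbound : Tendsto (fun t => gronwallBound (f T) (-d) A (t - T)) atTop (𝓝 (A / d)) := by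
    have := (tendsto_gronwallBound_of_neg (δ := f T) (ε := A) (neg_lt_zero.2 hd)).comp
      (tendsto_atTop_add_const_right atTop (-T) tendsto_id)
    simpa [div_neg, Function.comp_def, sub_eq_add_neg] using this
  calc limsup f atTop
      ≤ limsup (fun t => gronwallBound (f T) (-d) A (t - T)) atTop :=
        limsup_le_limsup (eventually_atTop.2 ⟨T, hgronwall⟩) hf hbound.isBoundedUnder_le
    _ = A / d := hbound.limsup_eq

theorem tendsto_zero_of_deriv_le_delay_linear {f f' : ℝ → ℝ} {c d τ : ℝ} (hc : 0 ≤ c)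
    (hcd : c < d) (hnonneg : ∀ t, 0 ≤ f t) (hbdd : ∃ M, ∀ t, f t ≤ M)
    (hderiv : ∀ᶠ t in atTop, HasDerivAt f (f' t) t)
    (hle : ∀ᶠ t in atTop, f' t ≤ c * f (t - τ) - d * f t) :
    Tendsto f atTop (𝓝 0) := by
  have hbddAbove : IsBoundedUnder (· ≤ ·) atTop f := isBoundedUnder_of hbdd
  have hbddBelow : IsBoundedUnder (· ≥ ·) atTop f := isBoundedUnder_of ⟨0, hnonneg⟩
  set L := limsup f atTop with hL_def
  have hL_nonneg : 0 ≤ L := le_limsup_of_frequently_le (Frequently.of_forall hnonneg) hbddAbove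
  have hstep : ∀ ε > 0, L * d ≤ c * (L + ε) := by
    intro ε hε
    have hdelay : ∀ᶠ t in atTop, f (t - τ) < L + ε :=
      (tendsto_atTop_add_const_right atTop (-τ) tendsto_id).eventually
        (eventually_lt_of_limsup_lt (by linarith) hbddAbove)
    have hlin : ∀ᶠ t in atTop, f' t ≤ c * (L + ε) - d * f t := by
      filter_upwards [hle, hdelay] with t hle_t hdelay_t
      nlinarith [mul_le_mul_of_nonneg_left hdelay_t.le hc]
    rw [← le_div_iff₀ (hc.trans_lt hcd)]
    exact limsup_le_div_of_deriv_le_sub_mul (hc.trans_lt hcd) hbddBelow.isCoboundedUnder_le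
      hderiv hlin
  have hlim : Tendsto (fun ε => c * (L + ε)) (𝓝[>] 0) (𝓝 (c * L)) := by
    have := ((tendsto_id (x := 𝓝 (0 : ℝ))).const_add L).const_mul c
    rw [add_zero] at this
    exact this.mono_left nhdsWithin_le_nhds
  have hcontraction : L * d ≤ c * L :=
    ge_of_tendsto hlim (eventually_nhdsWithin_of_forall hstep)
  have hL : L = 0 := by nlinarith
  exact tendsto_order.2 ⟨fun a ha => Eventually.of_forall fun t => ha.trans_le (hnonneg t),
    fun b hb => eventually_lt_of_limsup_lt (by rwa [← hL_def, hL]) hbddAbove⟩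

theorem stmt_9_general (r K d_b d_h τ : ℝ)
    (hr : 0 < r) (hK : 0 < K)
    (hcond : d_h > r * exp (-(d_b * τ)) / (2 * Real.sqrt K))
    (H H' : ℝ → ℝ)
    (hnonneg : ∀ t, 0 ≤ H t)
    (hbdd : ∃ M : ℝ, ∀ t, H t ≤ M)
    (hderiv : ∀ t, 0 ≤ t → HasDerivAt H (H' t) t)
    (hineq : ∀ t, 0 ≤ t →
      H' t ≤ exp (-(d_b * τ)) * r * (H (t - τ)) ^ 2 / (K + (H (t - τ)) ^ 2) - d_h * H t) :
    Tendsto H atTop (nhds 0) := by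
  rw [mul_comm r] at hcond
  refine tendsto_zero_of_deriv_le_delay_linear (τ := τ) (by positivity) hcond hnonneg hbdd
    (eventually_atTop.2 ⟨0, hderiv⟩) (eventually_atTop.2 ⟨0, fun t ht => ?_⟩)
  exact (hineq t ht).trans
    (sub_le_sub_right (mul_sq_div_add_sq_le (by positivity) hK (hnonneg _)) _)

theorem stmt_9 (r K d_b d_h τ : ℝ)
    (hr : 0 < r) (hK : 0 < K) (hdb : 0 < d_b) (hdh : 0 < d_h) (hτ : 0 < τ)
    (hcond : d_h > r * exp (-(d_b * τ)) / (2 * Real.sqrt K))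
    (H H' : ℝ → ℝ)
    (hcont : Continuous H)
    (hnonneg : ∀ t, 0 ≤ H t)
    (hbdd : ∃ M : ℝ, ∀ t, H t ≤ M)
    (hderiv : ∀ t, 0 ≤ t → HasDerivAt H (H' t) t)
    (hineq : ∀ t, 0 ≤ t →
      H' t ≤ exp (-(d_b * τ)) * r * (H (t - τ)) ^ 2 / (K + (H (t - τ)) ^ 2) - d_h * H t) :
    Tendsto H atTop (nhds 0) :=
  stmt_9_general r K d_b d_h τ hr hK hcond H H' hnonneg hbdd hderiv hineq
end

section
/- Let √2/2 ≤ d_b < 1 and 0 < τ < τ* := (1/d_b)·ln(1/d_b). Then φ(τ) := −2·d_b² + (1 − τ·d_b)·e^{−2·d_b·τ} < 0. -/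
open Real

theorem stmt_12 (d_b τ : ℝ)
    (hdb1 : Real.sqrt 2 / 2 ≤ d_b) (hdb2 : d_b < 1)
    (hτ0 : 0 < τ) (hτ : τ < (1 / d_b) * Real.log (1 / d_b)) :
    -2 * d_b ^ 2 + (1 - τ * d_b) * exp (-(2 * d_b * τ)) < 0 := by
  have h2 : (0:ℝ) < Real.sqrt 2 / 2 := by positivity
  have hd0 : 0 < d_b := lt_of_lt_of_le h2 hdb1
  have hsq : (1:ℝ)/2 ≤ d_b ^ 2 := by
    have := mul_self_le_mul_self (le_of_lt h2) hdb1
    have hs : Real.sqrt 2 / 2 * (Real.sqrt 2 / 2) = 1/2 := by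
      rw [div_mul_div_comm, Real.mul_self_sqrt (by norm_num)]; norm_num
    nlinarith
  have hexp : Real.exp (-(2 * d_b * τ)) < 1 := by
    rw [Real.exp_lt_one_iff]; nlinarith
  have hexp0 : 0 < Real.exp (-(2 * d_b * τ)) := Real.exp_pos _
  rcases le_or_gt (1 - τ * d_b) 0 with h | h
  · nlinarith
  · nlinarith
end

section
/- Let 1/e ≤ d_b < √2/2 and set τ* = (1/d_b)·ln(1/d_b). Define φ(τ) = −2 d_b² + (1 − τ d_b) e^{−2 d_b τ}. Then φ(0) = 1 − 2 d_b² > 0, φ(τ*) < 0, and φ'(τ) = e^{−2 d_b τ}·d_b·(2 τ d_b − 3) < 0 for τ ∈ (0, τ*); hence there exists a unique τ_c ∈ (0, τ*) with φ(τ_c) = 0, φ > 0 on (0, τ_c), and φ < 0 on (τ_c, τ*). -/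
/-!
Since `τ* d_b = ln(1/d_b)` we get `e^{-2 d_b τ*} = d_b²`, so `φ(τ*) = d_b² (ln d_b - 1) < 0`,
while `φ(0) = 1 - 2 d_b² > 0` because `d_b < √2/2`. On `(0, τ*)` we have `τ d_b < ln(1/d_b) ≤ 1`,
so `2 τ d_b - 3 < 0` and `φ` is strictly decreasing there.
The intermediate value theorem then gives the zero `τ_c`, and strict monotonicity its uniqueness
and the sign pattern.
-/

open Real Set

theorem exists_zero_of_strictAntiOn_Icc {f : ℝ → ℝ} {a b : ℝ} (hab : a ≤ b)
    (hcont : ContinuousOn f (Icc a b)) (hanti : StrictAntiOn f (Icc a b))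
    (ha : 0 < f a) (hb : f b < 0) :
    ∃ c ∈ Ioo a b, f c = 0 ∧
      (∀ x ∈ Ioo a c, 0 < f x) ∧
      (∀ x ∈ Ioo c b, f x < 0) ∧
      (∀ x ∈ Ioo a b, f x = 0 → x = c) := by
  obtain ⟨c, hc, hfc⟩ := intermediate_value_Ioo' hab hcont ⟨hb, ha⟩
  have hcI : c ∈ Icc a b := Ioo_subset_Icc_self hc
  refine ⟨c, hc, hfc, fun x hx => ?_, fun x hx => ?_, fun x hx hfx => ?_⟩
  · rw [← hfc]
    exact hanti ⟨hx.1.le, hx.2.le.trans hc.2.le⟩ hcI hx.2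
  · rw [← hfc]
    exact hanti hcI ⟨hc.1.le.trans hx.1.le, hx.2.le⟩ hx.1
  · exact hanti.injOn (Ioo_subset_Icc_self hx) hcI (hfx.trans hfc.symm)

noncomputable def crossingFn (d τ : ℝ) : ℝ := -2 * d ^ 2 + (1 - τ * d) * exp (-(2 * d * τ))

theorem hasDerivAt_crossingFn (d τ : ℝ) :
    HasDerivAt (crossingFn d) (exp (-(2 * d * τ)) * d * (2 * τ * d - 3)) τ := by
  have hlin : HasDerivAt (fun τ : ℝ => 1 - τ * d) (-d) τ := by
    simpa using ((hasDerivAt_id τ).mul_const d).const_sub 1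
  have hexp : HasDerivAt (fun τ : ℝ => exp (-(2 * d * τ))) (exp (-(2 * d * τ)) * -(2 * d)) τ := by
    simpa using (((hasDerivAt_id τ).const_mul (2 * d)).neg).exp
  exact ((hlin.mul hexp).const_add (-2 * d ^ 2)).congr_deriv (by ring)

theorem continuous_crossingFn (d : ℝ) : Continuous (crossingFn d) := by
  unfold crossingFn
  fun_prop

theorem crossingFn_deriv_neg {d τ : ℝ} (hd : 0 < d) (hτ : 2 * τ * d < 3) :
    exp (-(2 * d * τ)) * d * (2 * τ * d - 3) < 0 :=
  mul_neg_of_pos_of_neg (mul_pos (exp_pos _) hd) (by linarith)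

theorem crossingFn_strictAntiOn {d : ℝ} (hd : 0 < d) :
    StrictAntiOn (crossingFn d) (Iic (3 / (2 * d))) := by
  refine strictAntiOn_of_deriv_neg (convex_Iic _) (continuous_crossingFn d).continuousOn
    fun τ hτ => ?_
  rw [interior_Iic, mem_Iio, lt_div_iff₀ (by positivity)] at hτ
  exact (hasDerivAt_crossingFn d τ).deriv ▸ crossingFn_deriv_neg hd (by linarith)

theorem crossingFn_zero (d : ℝ) : crossingFn d 0 = 1 - 2 * d ^ 2 := by
  simp [crossingFn, neg_add_eq_sub]

theorem one_div_mul_log_one_div_mul_self {d : ℝ} (hd : 0 < d) :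
    (1 / d) * log (1 / d) * d = -log d := by
  rw [one_div, log_inv]
  field_simp

theorem crossingFn_one_div_mul_log_one_div {d : ℝ} (hd : 0 < d) :
    crossingFn d ((1 / d) * log (1 / d)) = d ^ 2 * (log d - 1) := by
  have hτd := one_div_mul_log_one_div_mul_self hd
  have hexp : exp (-(2 * d * ((1 / d) * log (1 / d)))) = d ^ 2 := by
    rw [show -(2 * d * ((1 / d) * log (1 / d))) = log (d ^ 2) by rw [log_pow]; push_cast; linarith,
      exp_log (by positivity)]
  rw [crossingFn, hexp, hτd]
  ring

theorem crossingFn_one_div_mul_log_one_div_neg {d : ℝ} (hd0 : 0 < d) (hd : d < exp 1) :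
    crossingFn d ((1 / d) * log (1 / d)) < 0 := by
  rw [crossingFn_one_div_mul_log_one_div hd0]
  have : log d < 1 := by rwa [log_lt_iff_lt_exp hd0]
  exact mul_neg_of_pos_of_neg (by positivity) (by linarith)

theorem stmt_13 (d_b : ℝ)
    (hdb1 : 1 / Real.exp 1 ≤ d_b) (hdb2 : d_b < Real.sqrt 2 / 2) :
    let τs := (1 / d_b) * Real.log (1 / d_b)
    let φ : ℝ → ℝ := fun τ => -2 * d_b ^ 2 + (1 - τ * d_b) * exp (-(2 * d_b * τ))
    (φ 0 = 1 - 2 * d_b ^ 2 ∧ 0 < φ 0) ∧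
    φ τs < 0 ∧
    (∀ τ ∈ Ioo (0 : ℝ) τs,
      HasDerivAt φ (exp (-(2 * d_b * τ)) * d_b * (2 * τ * d_b - 3)) τ ∧
      exp (-(2 * d_b * τ)) * d_b * (2 * τ * d_b - 3) < 0) ∧
    (∃ τc ∈ Ioo (0 : ℝ) τs, φ τc = 0 ∧
      (∀ τ ∈ Ioo (0 : ℝ) τc, 0 < φ τ) ∧
      (∀ τ ∈ Ioo τc τs, φ τ < 0) ∧
      (∀ τ ∈ Ioo (0 : ℝ) τs, φ τ = 0 → τ = τc)) := by
  intro τs φ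
  rw [show φ = crossingFn d_b from rfl]
  have hd0 : 0 < d_b := lt_of_lt_of_le (by positivity) hdb1
  have hsq : 2 * d_b ^ 2 < 1 := by
    have := (sq_lt_sq₀ hd0.le (by positivity)).2 hdb2
    rw [div_pow, sq_sqrt zero_le_two] at this
    linarith
  have hd1 : d_b < 1 := by nlinarith
  have hτsd : τs * d_b ≤ 1 := by
    have := log_le_log (by positivity) hdb1
    rw [one_div, log_inv, log_exp] at this
    rw [one_div_mul_log_one_div_mul_self hd0]
    linarith
  have hτs : 0 < τs := by
    have : 0 < log (1 / d_b) := log_pos (one_lt_one_div hd0 hd1)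
    positivity
  have hτ_lt : ∀ τ ≤ τs, 2 * τ * d_b < 3 := fun τ hτ => by
    nlinarith [mul_le_mul_of_nonneg_right hτ hd0.le]
  have hanti : StrictAntiOn (crossingFn d_b) (Icc 0 τs) :=
    (crossingFn_strictAntiOn hd0).mono fun τ hτ => by
      rw [mem_Iic, le_div_iff₀ (by positivity)]
      linarith [hτ_lt τ hτ.2]
  have hφτs := crossingFn_one_div_mul_log_one_div_neg hd0 (hd1.trans (one_lt_exp_iff.2 one_pos))
  have hφ0 := crossingFn_zero d_b
  refine ⟨⟨hφ0, by linarith⟩, hφτs, fun τ hτ => ⟨hasDerivAt_crossingFn d_b τ,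
    crossingFn_deriv_neg hd0 (hτ_lt τ hτ.2.le)⟩, ?_⟩
  exact exists_zero_of_strictAntiOn_Icc hτs.le (continuous_crossingFn d_b).continuousOn hanti
    (by linarith) hφτs
end

section
/- Let r, K, d_b, d_h, τ > 0 with r > 2√K·d_h·(d_b e^{d_b τ} + 1), and let H* be a positive root of rH/(K+H²) = d_h(d_b e^{d_b τ}+1). Define Φ(H*) = 2rK H*/(K+(H*)²)² and C(0,τ) = d_b d_h + (d_h − Φ(H*))·e^{−d_b τ}. Then C(0,τ) = e^{−d_b τ}·(rH*/(K+(H*)²) − 2rKH*/(K+(H*)²)²) = e^{−d_b τ}·(rH*·((H*)² − K))/(K+(H*)²)². Consequently C(0,τ) < 0 when (H*)² < K and C(0,τ) > 0 when (H*)² > K; in particular λ = 0 is never a root of the characteristic equation at either interior equilibrium. -/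
open Real

theorem stmt_16 (r K d_b d_h τ H : ℝ)
    (hr : 0 < r) (hK : 0 < K) (hdb : 0 < d_b) (hdh : 0 < d_h) (hτ : 0 < τ)
    (hcond : r > 2 * Real.sqrt K * d_h * (d_b * exp (d_b * τ) + 1))
    (hH : 0 < H)
    (heq : r * H / (K + H ^ 2) = d_h * (d_b * exp (d_b * τ) + 1)) :
    let Φ := 2 * r * K * H / (K + H ^ 2) ^ 2
    let C0 := d_b * d_h + (d_h - Φ) * exp (-(d_b * τ))
    C0 = exp (-(d_b * τ)) * (r * H / (K + H ^ 2) - 2 * r * K * H / (K + H ^ 2) ^ 2) ∧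
    C0 = exp (-(d_b * τ)) * (r * H * (H ^ 2 - K)) / (K + H ^ 2) ^ 2 ∧
    (H ^ 2 < K → C0 < 0) ∧
    (H ^ 2 > K → C0 > 0) ∧
    (H ^ 2 ≠ K → C0 ≠ 0) := by
  intro Φ C0
  have hD : 0 < K + H ^ 2 := by positivity
  have hE : 0 < exp (-(d_b * τ)) := exp_pos _
  have hEE : exp (-(d_b * τ)) * exp (d_b * τ) = 1 := by
    rw [← exp_add]; simp
  have h1 : C0 = exp (-(d_b * τ)) * (r * H / (K + H ^ 2) - 2 * r * K * H / (K + H ^ 2) ^ 2) := by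
    show d_b * d_h + (d_h - 2 * r * K * H / (K + H ^ 2) ^ 2) * exp (-(d_b * τ)) = _
    rw [heq]; linear_combination (-(d_b * d_h)) * hEE
  have h2 : C0 = exp (-(d_b * τ)) * (r * H * (H ^ 2 - K)) / (K + H ^ 2) ^ 2 := by
    rw [h1]; field_simp; ring
  refine ⟨h1, h2, ?_, ?_, ?_⟩
  · intro h
    rw [h2]
    apply div_neg_of_neg_of_pos _ (by positivity)
    have : H ^ 2 - K < 0 := by linarith
    exact mul_neg_of_pos_of_neg hE (mul_neg_of_pos_of_neg (by positivity) this)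
  · intro h
    rw [h2]
    apply div_pos _ (by positivity)
    have : 0 < H ^ 2 - K := by linarith
    positivity
  · intro h
    rw [h2]
    rcases lt_or_gt_of_ne h with h' | h'
    · have : H ^ 2 - K < 0 := by linarith
      have : exp (-(d_b * τ)) * (r * H * (H ^ 2 - K)) < 0 :=
        mul_neg_of_pos_of_neg hE (mul_neg_of_pos_of_neg (by positivity) this)
      exact ne_of_lt (div_neg_of_neg_of_pos this (by positivity))
    · have : 0 < H ^ 2 - K := by linarith
      have : 0 < exp (-(d_b * τ)) * (r * H * (H ^ 2 - K)) := by positivity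
      exact ne_of_gt (div_pos this (by positivity))
end
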